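/- For each i, j ∈ {1,2} let (pᵢⱼ, qᵢⱼ, rᵢⱼ, sᵢⱼ) be nonnegative reals summing to 1, representing the joint distribution of a ±1-valued pair (Aᵢⱼ, Bᵢⱼ) with Pr[Aᵢⱼ=+1,Bᵢⱼ=+1]=pᵢⱼ, Pr[Aᵢⱼ=+1,Bᵢⱼ=−1]=qᵢⱼ, Pr[Aᵢⱼ=−1,Bᵢⱼ=+1]=rᵢⱼ, Pr[Aᵢⱼ=−1,Bᵢⱼ=−1]=sᵢⱼ. There exists a probability distribution on ({−1,+1})⁴, viewed as the joint distribution of (H¹₁, H¹₂, H²₁, H²₂), such that the pair (H¹ᵢ, H²ⱼ) has the distribution (pᵢⱼ, qᵢⱼ, rᵢⱼ, sᵢⱼ) for all i, j ∈ {1,2}, if and only if (a) marginal selectivity holds: pᵢ₁ + qᵢ₁ = pᵢ₂ + qᵢ₂ and p₁ⱼ + r₁ⱼ = p₂ⱼ + r₂ⱼ for all i, j ∈ {1,2}, and (b) for every choice of i ≠ i′ and j ≠ j′ in {1,2}, −2 ≤ Eᵢⱼ + Eᵢ′ⱼ + Eᵢ′ⱼ′ − Eᵢⱼ′ ≤ 2,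 where Eᵢⱼ = pᵢⱼ + sᵢⱼ − qᵢⱼ − rᵢⱼ. -/

import Mathlib

/-!
Necessity: for each deterministic assignment of ±1 values the CHSH expression
`x y + x' y + x' y' - x y'` equals `±2`, and the CHSH combination of the correlations `Eᵢⱼ` is
its average.

Sufficiency: by marginal selectivity the data are `aᵢ = Pr[H¹ᵢ]`, `bⱼ = Pr[H²ⱼ]` and
`Pᵢⱼ = Pr[H¹ᵢ ∧ H²ⱼ]`. Adding the chord `H²₁ — H²₂` splits the 4-cycle of observed pairs into the
two triangles `(H¹ᵢ, H²₁, H²₂)`. Three binary variables with prescribed pair laws have a joint law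
iff `Pr[X ∧ Y ∧ Z]` fits between four lower and four upper bounds, so we need a value
`t = Pr[H²₁ ∧ H²₂]` making both triangles feasible; comparing the bounds on `t` coming from the two
triangles gives exactly the Clauser–Horne inequalities, i.e. CHSH. The two triangle laws are then
glued by making `H¹₁` and `H¹₂` conditionally independent given `(H²₁, H²₂)`.
-/

open Finset

namespace CHSH

section Correlation

variable {Ω : Type*} [Fintype Ω] (μ : Ω → ℝ) (X Y : Ω → Bool)

def spin (b : Bool) : ℝ := if b then 1 else -1

def correlation : ℝ := ∑ ω, μ ω * (spin (X ω) * spin (Y ω))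

lemma abs_chsh_spin_le (x x' y y' : Bool) :
    |spin x * spin y + spin x' * spin y + spin x' * spin y' - spin x * spin y'| ≤ 2 := by
  cases x <;> cases x' <;> cases y <;> cases y' <;> norm_num [spin]

lemma sum_eq_sum_filter_and :
    ∑ ω, μ ω = ∑ ω with X ω = true ∧ Y ω = true, μ ω
      + ∑ ω with X ω = true ∧ Y ω = false, μ ω
      + ∑ ω with X ω = false ∧ Y ω = true, μ ω
      + ∑ ω with X ω = false ∧ Y ω = false, μ ω := by
  simp only [sum_filter, ← sum_add_distrib]
  refine sum_congr rfl fun ω _ => ?_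
  cases X ω <;> cases Y ω <;> simp

lemma sum_filter_and_true_add_sum_filter_and_false (x : Bool) :
    ∑ ω with X ω = x ∧ Y ω = true, μ ω + ∑ ω with X ω = x ∧ Y ω = false, μ ω
      = ∑ ω with X ω = x, μ ω := by
  simp only [sum_filter, ← sum_add_distrib]
  refine sum_congr rfl fun ω _ => ?_
  cases Y ω <;> by_cases X ω = x <;> simp [*]

lemma sum_filter_true_and_add_sum_filter_false_and (y : Bool) :
    ∑ ω with X ω = true ∧ Y ω = y, μ ω + ∑ ω with X ω = false ∧ Y ω = y, μ ω
      = ∑ ω with Y ω = y, μ ω := by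
  simp only [sum_filter, ← sum_add_distrib]
  refine sum_congr rfl fun ω _ => ?_
  cases X ω <;> by_cases Y ω = y <;> simp [*]

lemma correlation_eq :
    correlation μ X Y = ∑ ω with X ω = true ∧ Y ω = true, μ ω
      + ∑ ω with X ω = false ∧ Y ω = false, μ ω
      - ∑ ω with X ω = true ∧ Y ω = false, μ ω
      - ∑ ω with X ω = false ∧ Y ω = true, μ ω := by
  simp only [correlation, sum_filter, ← sum_add_distrib, ← sum_sub_distrib]
  refine sum_congr rfl fun ω _ => ?_
  cases X ω <;> cases Y ω <;> simp [spin]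

variable {μ}

theorem abs_chsh_le (hμ : ∀ ω, 0 ≤ μ ω) (hμ1 : ∑ ω, μ ω = 1) (A A' B B' : Ω → Bool) :
    |correlation μ A B + correlation μ A' B + correlation μ A' B' - correlation μ A B'| ≤ 2 := by
  calc _ = |∑ ω, μ ω * (spin (A ω) * spin (B ω) + spin (A' ω) * spin (B ω)
          + spin (A' ω) * spin (B' ω) - spin (A ω) * spin (B' ω))| := by
        simp only [correlation, ← sum_add_distrib, ← sum_sub_distrib, mul_add, mul_sub]
    _ ≤ ∑ ω, μ ω * 2 := by
        refine (abs_sum_le_sum_abs _ _).trans (sum_le_sum fun ω _ => ?_)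
        rw [abs_mul, abs_of_nonneg (hμ ω)]
        exact mul_le_mul_of_nonneg_left (abs_chsh_spin_le ..) (hμ ω)
    _ = 2 := by rw [← sum_mul, hμ1, one_mul]

end Correlation

/- By inclusion–exclusion: `pairLaw a b u` is the law of `(X, Y)` with `Pr[X] = a`, `Pr[Y] = b`,
`Pr[X ∧ Y] = u`, and `tripleLaw a b c u v w z` the law of `(X, Y, Z)` with marginals `a, b, c`,
`Pr[X ∧ Y] = u`, `Pr[X ∧ Z] = v`, `Pr[Y ∧ Z] = w` and `Pr[X ∧ Y ∧ Z] = z`. -/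
def pairLaw (a b u : ℝ) : Bool → Bool → ℝ
  | true, true => u
  | true, false => a - u
  | false, true => b - u
  | false, false => 1 - a - b + u

def tripleLaw (a b c u v w z : ℝ) : Bool → Bool → Bool → ℝ
  | true, true, true => z
  | true, true, false => u - z
  | true, false, true => v - z
  | false, true, true => w - z
  | true, false, false => a - u - v + z
  | false, true, false => b - u - w + z
  | false, false, true => c - v - w + z
  | false, false, false => 1 - a - b - c + u + v + w - z

lemma forall_pairLaw_nonneg_iff {a b u : ℝ} :
    (∀ x y, 0 ≤ pairLaw a b u x y) ↔ 0 ≤ u ∧ u ≤ a ∧ u ≤ b ∧ a + b - 1 ≤ u := by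
  simp only [Bool.forall_bool, pairLaw, sub_nonneg]
  constructor
  · rintro ⟨⟨h₁, h₂⟩, h₃, h₄⟩; exact ⟨h₄, h₃, h₂, by linarith⟩
  · rintro ⟨h₁, h₂, h₃, h₄⟩; exact ⟨⟨by linarith, h₃⟩, h₂, h₁⟩

lemma sum_pairLaw (a b u : ℝ) : ∑ x, ∑ y, pairLaw a b u x y = 1 := by
  simp only [Fintype.sum_bool, pairLaw]
  ring

section TripleLaw

variable (a b c u v w z : ℝ) (x y y' : Bool)

lemma sum_tripleLaw_fst : ∑ x, tripleLaw a b c u v w z x y y' = pairLaw b c w y y' := by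
  cases y <;> cases y' <;> simp only [Fintype.sum_bool, tripleLaw, pairLaw] <;> ring

lemma sum_tripleLaw_snd : ∑ y, tripleLaw a b c u v w z x y y' = pairLaw a c v x y' := by
  cases x <;> cases y' <;> simp only [Fintype.sum_bool, tripleLaw, pairLaw] <;> ring

lemma sum_tripleLaw_thd : ∑ y', tripleLaw a b c u v w z x y y' = pairLaw a b u x y := by
  cases x <;> cases y <;> simp only [Fintype.sum_bool, tripleLaw, pairLaw] <;> ring

end TripleLaw

lemma exists_forall_le_forall_le {α : Type*} [LinearOrder α] {L U : Finset α} (hL : L.Nonempty)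
    (h : ∀ l ∈ L, ∀ u ∈ U, l ≤ u) : ∃ t, (∀ l ∈ L, l ≤ t) ∧ ∀ u ∈ U, t ≤ u :=
  ⟨L.max' hL, fun l hl => L.le_max' l hl, fun u hu => L.max'_le hL u fun l hl => h l hl u hu⟩

/-- `z` must lie between four lower and four upper bounds; of the sixteen comparisons between them,
twelve are the Fréchet bounds of the three pair laws and the other four are `h₁`–`h₄`. -/
theorem exists_tripleLaw_nonneg {a b c u v w : ℝ} (hXY : ∀ x y, 0 ≤ pairLaw a b u x y)
    (hXZ : ∀ x z, 0 ≤ pairLaw a c v x z) (hYZ : ∀ y z, 0 ≤ pairLaw b c w y z)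
    (h₁ : 0 ≤ 1 - a - b - c + u + v + w) (h₂ : u + v - a ≤ w) (h₃ : u + w - b ≤ v)
    (h₄ : v + w - c ≤ u) :
    ∃ z, ∀ x y y', 0 ≤ tripleLaw a b c u v w z x y y' := by
  rw [forall_pairLaw_nonneg_iff] at hXY hXZ hYZ
  obtain ⟨z, hlow, hup⟩ := exists_forall_le_forall_le (L := {0, u + v - a, u + w - b, v + w - c})
    (U := {u, v, w, 1 - a - b - c + u + v + w}) (insert_nonempty _ _) (by
      simp only [mem_insert, mem_singleton, forall_eq_or_imp, forall_eq]
      and_intros <;> linarith)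
  simp only [mem_insert, mem_singleton, forall_eq_or_imp, forall_eq] at hlow hup
  refine ⟨z, fun x y y' => ?_⟩
  cases x <;> cases y <;> cases y' <;> simp only [tripleLaw] <;> linarith

section Glue

variable {ι α γ : Type*} [Fintype ι] (T : ι → α → γ → ℝ) (m : γ → ℝ)

/-- The law of `((Xᵢ)ᵢ, Y)` with the `Xᵢ` conditionally independent given `Y`, where `(Xᵢ, Y)` has
law `T i` and `Y` has law `m`. Where `m c = 0` the division by zero gives `0`, which is correct
since then every `T i x c` vanishes. -/
noncomputable def condIndepGlue (a : ι → α) (c : γ) : ℝ :=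
  (∏ i, T i (a i) c) / m c ^ (Fintype.card ι - 1)

variable {T m}

lemma condIndepGlue_nonneg (hT : ∀ i x c, 0 ≤ T i x c) (hm : ∀ c, 0 ≤ m c) (a : ι → α)
    (c : γ) : 0 ≤ condIndepGlue T m a c :=
  div_nonneg (prod_nonneg fun i _ => hT i (a i) c) (pow_nonneg (hm c) _)

variable [DecidableEq ι] [Fintype α] [DecidableEq α]

lemma filter_apply_eq_eq_piFinset (i : ι) (x : α) :
    ({a | a i = x} : Finset (ι → α)) = Fintype.piFinset fun k => if k = i then {x} else univ := by
  ext a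
  simp only [mem_filter, mem_univ, true_and, Fintype.mem_piFinset]
  constructor
  · rintro rfl k
    split_ifs with hk <;> simp [hk]
  · intro h
    simpa using h i

theorem sum_filter_condIndepGlue (hT : ∀ i x c, 0 ≤ T i x c) (hTm : ∀ i c, ∑ x, T i x c = m c)
    (i : ι) (x : α) (c : γ) :
    ∑ a with a i = x, condIndepGlue T m a c = T i x c := by
  have hprod : ∑ a : ι → α with a i = x, ∏ k, T k (a k) c
      = T i x c * m c ^ (Fintype.card ι - 1) := by
    rw [filter_apply_eq_eq_piFinset, ← prod_univ_sum _ fun k y => T k y c,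
      ← mul_prod_erase univ _ (mem_univ i), if_pos rfl, sum_singleton, ← card_univ,
      ← card_erase_of_mem (mem_univ i), ← prod_const]
    refine congrArg _ (prod_congr rfl fun k hk => ?_)
    rw [if_neg (ne_of_mem_erase hk), hTm]
  simp only [condIndepGlue, ← sum_div, hprod]
  by_cases hmc : m c = 0
  · have : T i x c = 0 :=
      (sum_eq_zero_iff_of_nonneg fun y _ => hT i y c).1 ((hTm i c).trans hmc) x (mem_univ x)
    simp [this]
  · rw [mul_div_cancel_right₀ _ (pow_ne_zero _ hmc)]

end Glue

lemma sum_fin_two_pi {β M : Type*} [Fintype β] [AddCommMonoid M] (G : (Fin 2 → β) → M) :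
    ∑ h, G h = ∑ a, ∑ c, G ![a, c] := by
  rw [← (finTwoArrowEquiv β).symm.sum_comp, Fintype.sum_prod_type]
  rfl

lemma sum_filter_and_fin_two {β M : Type*} [Fintype β] [AddCommMonoid M] (p q : β → Prop)
    [DecidablePred p] [DecidablePred q] (F : β → β → M) :
    ∑ h : Fin 2 → β with p (h 0) ∧ q (h 1), F (h 0) (h 1)
      = ∑ c with q c, ∑ a with p a, F a c := by
  rw [sum_filter, sum_fin_two_pi, sum_comm, sum_filter]
  refine sum_congr rfl fun c _ => ?_
  by_cases hc : q c <;> simp [sum_filter, hc]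

section HiddenVariables

variable (a b : Fin 2 → ℝ) (P : Fin 2 → Fin 2 → ℝ)

/-- `t = Pr[H²₁ ∧ H²₂]` has to lie above six lower and below six upper bounds; comparing a bound
from one triangle `(H¹ᵢ, H²₁, H²₂)` with one from the other is a Clauser–Horne inequality. -/
theorem exists_pairLaw_forall_tripleLaw_nonneg
    (hpair : ∀ i j x y, 0 ≤ pairLaw (a i) (b j) (P i j) x y)
    (hCH : ∀ i i' j j', i ≠ i' → j ≠ j' →
      -1 ≤ P i j + P i' j + P i' j' - P i j' - a i' - b j ∧
        P i j + P i' j + P i' j' - P i j' - a i' - b j ≤ 0) :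
    ∃ t, (∀ y y', 0 ≤ pairLaw (b 0) (b 1) t y y') ∧
      ∀ i, ∃ z, ∀ x y y', 0 ≤ tripleLaw (a i) (b 0) (b 1) (P i 0) (P i 1) t z x y y' := by
  have hF := fun i j => forall_pairLaw_nonneg_iff.1 (hpair i j)
  obtain ⟨_, _, _, _⟩ := hF 0 0
  obtain ⟨_, _, _, _⟩ := hF 0 1
  obtain ⟨_, _, _, _⟩ := hF 1 0
  obtain ⟨_, _, _, _⟩ := hF 1 1
  obtain ⟨_, _⟩ := hCH 0 1 0 1 (by decide) (by decide)
  obtain ⟨_, _⟩ := hCH 0 1 1 0 (by decide) (by decide)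
  obtain ⟨_, _⟩ := hCH 1 0 0 1 (by decide) (by decide)
  obtain ⟨_, _⟩ := hCH 1 0 1 0 (by decide) (by decide)
  obtain ⟨t, hlow, hup⟩ := exists_forall_le_forall_le
    (L := {0, b 0 + b 1 - 1, P 0 0 + P 0 1 - a 0, P 1 0 + P 1 1 - a 1,
      a 0 + b 0 + b 1 - P 0 0 - P 0 1 - 1, a 1 + b 0 + b 1 - P 1 0 - P 1 1 - 1})
    (U := {b 0, b 1, b 0 - P 0 0 + P 0 1, b 1 + P 0 0 - P 0 1,
      b 0 - P 1 0 + P 1 1, b 1 + P 1 0 - P 1 1}) (insert_nonempty _ _) (by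
      simp only [mem_insert, mem_singleton, forall_eq_or_imp, forall_eq]
      and_intros <;> linarith)
  simp only [mem_insert, mem_singleton, forall_eq_or_imp, forall_eq] at hlow hup
  obtain ⟨ht, hB₁, _, _, _, _⟩ := hlow
  obtain ⟨hB₂, hB₃, _, _, _, _⟩ := hup
  have hBB : ∀ y y', 0 ≤ pairLaw (b 0) (b 1) t y y' :=
    forall_pairLaw_nonneg_iff.2 ⟨ht, hB₂, hB₃, hB₁⟩
  refine ⟨t, hBB, Fin.forall_fin_two.2 ⟨?_, ?_⟩⟩ <;>
    exact exists_tripleLaw_nonneg (hpair _ 0) (hpair _ 1) hBB (by linarith) (by linarith)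
      (by linarith) (by linarith)

variable (t : ℝ) (z : Fin 2 → ℝ)

noncomputable def hiddenLaw (h : Fin 2 → Fin 2 → Bool) : ℝ :=
  condIndepGlue (fun i x c => tripleLaw (a i) (b 0) (b 1) (P i 0) (P i 1) t (z i) x (c 0) (c 1))
    (fun c => pairLaw (b 0) (b 1) t (c 0) (c 1)) (h 0) (h 1)

variable {a b P t z}

lemma hiddenLaw_nonneg (hB : ∀ y y', 0 ≤ pairLaw (b 0) (b 1) t y y')
    (hT : ∀ i x y y', 0 ≤ tripleLaw (a i) (b 0) (b 1) (P i 0) (P i 1) t (z i) x y y')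
    (h : Fin 2 → Fin 2 → Bool) : 0 ≤ hiddenLaw a b P t z h :=
  condIndepGlue_nonneg (fun i x (c : Fin 2 → Bool) => hT i x (c 0) (c 1))
    (fun c => hB (c 0) (c 1)) _ _

lemma sum_filter_hiddenLaw
    (hT : ∀ i x y y', 0 ≤ tripleLaw (a i) (b 0) (b 1) (P i 0) (P i 1) t (z i) x y y')
    (i j : Fin 2) (x y : Bool) :
    ∑ h with h 0 i = x ∧ h 1 j = y, hiddenLaw a b P t z h = pairLaw (a i) (b j) (P i j) x y := by
  refine (sum_filter_and_fin_two (fun a : Fin 2 → Bool => a i = x) (fun c => c j = y) _).trans ?_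
  rw [sum_congr rfl fun c _ => sum_filter_condIndepGlue (fun i x c => hT i x (c 0) (c 1))
    (fun i c => sum_tripleLaw_fst ..) i x c]
  fin_cases j
  · simpa [sum_filter, sum_fin_two_pi] using
      sum_tripleLaw_thd (a i) (b 0) (b 1) (P i 0) (P i 1) t (z i) x y
  · simpa [sum_filter, sum_fin_two_pi] using
      sum_tripleLaw_snd (a i) (b 0) (b 1) (P i 0) (P i 1) t (z i) x y

variable (a b P) in
theorem exists_hiddenLaw_of_clauserHorne
    (hpair : ∀ i j x y, 0 ≤ pairLaw (a i) (b j) (P i j) x y)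
    (hCH : ∀ i i' j j', i ≠ i' → j ≠ j' →
      -1 ≤ P i j + P i' j + P i' j' - P i j' - a i' - b j ∧
        P i j + P i' j + P i' j' - P i j' - a i' - b j ≤ 0) :
    ∃ μ : (Fin 2 → Fin 2 → Bool) → ℝ, (∀ h, 0 ≤ μ h) ∧ ∑ h, μ h = 1 ∧
      ∀ i j x y, ∑ h with h 0 i = x ∧ h 1 j = y, μ h = pairLaw (a i) (b j) (P i j) x y := by
  obtain ⟨t, hB, hT⟩ := exists_pairLaw_forall_tripleLaw_nonneg a b P hpair hCH
  choose z hz using hT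
  have hlaw := sum_filter_hiddenLaw hz
  refine ⟨hiddenLaw a b P t z, hiddenLaw_nonneg hB hz, ?_, hlaw⟩
  rw [sum_eq_sum_filter_and _ (· 0 0) (· 1 0), hlaw, hlaw, hlaw, hlaw,
    ← sum_pairLaw (a 0) (b 0) (P 0 0)]
  simp only [Fintype.sum_bool]
  ring

end HiddenVariables

end CHSH

open CHSH

theorem bell_chsh_general
    (p q r s : Fin 2 → Fin 2 → ℝ)
    (hp : ∀ i j, 0 ≤ p i j) (hq : ∀ i j, 0 ≤ q i j)
    (hr : ∀ i j, 0 ≤ r i j) (hs : ∀ i j, 0 ≤ s i j)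
    (hsum : ∀ i j, p i j + q i j + r i j + s i j = 1) :
    (∃ μ : (Fin 2 → Fin 2 → Bool) → ℝ,
      (∀ h, 0 ≤ μ h) ∧
      (∑ h : Fin 2 → Fin 2 → Bool, μ h = 1) ∧
      (∀ i j : Fin 2,
        ∑ h ∈ Finset.univ.filter
            (fun h : Fin 2 → Fin 2 → Bool => h 0 i = true ∧ h 1 j = true), μ h = p i j) ∧
      (∀ i j : Fin 2,
        ∑ h ∈ Finset.univ.filter
            (fun h : Fin 2 → Fin 2 → Bool => h 0 i = true ∧ h 1 j = false), μ h = q i j) ∧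
      (∀ i j : Fin 2,
        ∑ h ∈ Finset.univ.filter
            (fun h : Fin 2 → Fin 2 → Bool => h 0 i = false ∧ h 1 j = true), μ h = r i j) ∧
      (∀ i j : Fin 2,
        ∑ h ∈ Finset.univ.filter
            (fun h : Fin 2 → Fin 2 → Bool => h 0 i = false ∧ h 1 j = false), μ h = s i j)) ↔
    ((∀ i : Fin 2, p i 0 + q i 0 = p i 1 + q i 1) ∧
     (∀ j : Fin 2, p 0 j + r 0 j = p 1 j + r 1 j) ∧
     (∀ i i' j j' : Fin 2, i ≠ i' → j ≠ j' →
        -2 ≤ (p i j + s i j - q i j - r i j) + (p i' j + s i' j - q i' j - r i' j)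
             + (p i' j' + s i' j' - q i' j' - r i' j')
             - (p i j' + s i j' - q i j' - r i j') ∧
        (p i j + s i j - q i j - r i j) + (p i' j + s i' j - q i' j - r i' j)
             + (p i' j' + s i' j' - q i' j' - r i' j')
             - (p i j' + s i j' - q i j' - r i j') ≤ 2)) := by
  constructor
  · rintro ⟨μ, hμ, hμ1, hP, hQ, hR, hS⟩
    have hE : ∀ i j, p i j + s i j - q i j - r i j = correlation μ (· 0 i) (· 1 j) :=
      fun i j => by rw [correlation_eq, hP, hQ, hR, hS]
    refine ⟨fun i => ?_, fun j => ?_, fun i i' j j' _ _ => ?_⟩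
    · rw [← hP, ← hQ, ← hP, ← hQ, sum_filter_and_true_add_sum_filter_and_false,
        sum_filter_and_true_add_sum_filter_and_false]
    · rw [← hP, ← hR, ← hP, ← hR, sum_filter_true_and_add_sum_filter_false_and,
        sum_filter_true_and_add_sum_filter_false_and]
    · simp only [hE]
      exact abs_le.1 (abs_chsh_le hμ hμ1 _ _ _ _)
  · rintro ⟨hA, hB, hCHSH⟩
    obtain ⟨a, ha⟩ : ∃ a : Fin 2 → ℝ, ∀ i j, p i j + q i j = a i :=
      ⟨fun i => p i 0 + q i 0, fun i => Fin.forall_fin_two.2 ⟨rfl, (hA i).symm⟩⟩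
    obtain ⟨b, hb⟩ : ∃ b : Fin 2 → ℝ, ∀ i j, p i j + r i j = b j :=
      ⟨fun j => p 0 j + r 0 j, Fin.forall_fin_two.2 ⟨fun _ => rfl, fun j => (hB j).symm⟩⟩
    -- `Eᵢⱼ = 4 pᵢⱼ - 2 aᵢ - 2 bⱼ + 1`, which turns CHSH into the Clauser–Horne inequalities.
    obtain ⟨μ, hμ, hμ1, hlaw⟩ := exists_hiddenLaw_of_clauserHorne a b p
      (fun i j x y => by
        cases x <;> cases y <;> simp only [pairLaw] <;>
          linarith [hp i j, hq i j, hr i j, hs i j, ha i j, hb i j, hsum i j])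
      (fun i i' j j' hi hj => by
        have := hCHSH i i' j j' hi hj
        constructor <;> linarith [ha i j, ha i' j, ha i' j', ha i j', hb i j, hb i' j, hb i' j',
          hb i j', hsum i j, hsum i' j, hsum i' j', hsum i j'])
    refine ⟨μ, hμ, hμ1, fun i j => ?_, fun i j => ?_, fun i j => ?_, fun i j => ?_⟩ <;>
      rw [hlaw] <;> simp only [pairLaw] <;> linarith [ha i j, hb i j, hsum i j]
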